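/- arXiv:2503.01026 — 2 statements merged into one kernel-verified Lean document; each statement's English description precedes it below -/
import Mathlib

section
/- The letter of the Narayana word at position i ≥ 0 equals 1 if the Narayana representation of i ends in the digit 1, equals 2 if it ends in the digits 10, and equals 0 otherwise. -/
def nu : Fin 3 → List (Fin 3) := fun a => if a = 0 then [0, 1] else if a = 1 then [2] else [0]

def nuPow (k : ℕ) : List (Fin 3) := (fun w => w.flatMap nu)^[k] [0]


def nara : ℕ → ℕ
  | 0 => 1
  | 1 => 2
  | 2 => 3
  | (i+3) => nara (i+2) + nara i


def NaraRep (F : Finset ℕ) (m : ℕ) : Prop :=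
  (∑ f ∈ F, nara f) = m ∧ ∀ a ∈ F, ∀ b ∈ F, a < b → a + 3 ≤ b


def nword (i : ℕ) : Fin 3 := (nuPow (i+2)).getD i 0

lemma nuPow_succ (k : ℕ) : nuPow (k+1) = (nuPow k).flatMap nu := by
  simp [nuPow, Function.iterate_succ_apply']

lemma nuPow_add3 : ∀ k, nuPow (k+3) = nuPow (k+2) ++ nuPow k := by
  intro k
  induction k with
  | zero => decide
  | succ k ih =>
    rw [show k+1+3 = (k+3)+1 by ring, nuPow_succ, ih, List.flatMap_append,
      ← nuPow_succ, ← nuPow_succ, show k+2+1 = k+3 from rfl, ih, List.append_assoc]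

lemma length_nuPow : ∀ k, (nuPow k).length = nara k
  | 0 => rfl
  | 1 => rfl
  | 2 => rfl
  | (k+3) => by
    rw [nuPow_add3, List.length_append, length_nuPow (k+2), length_nuPow k]
    rfl

lemma nara_pos : ∀ k, 0 < nara k
  | 0 => by decide
  | 1 => by decide
  | 2 => by decide
  | (k+3) => by
    have := nara_pos k
    show 0 < nara (k+2) + nara k
    omega

lemma nara_strictMono : StrictMono nara := by
  apply strictMono_nat_of_lt_succ
  intro n
  match n with
  | 0 => decide
  | 1 => decide
  | (k+2) =>
    show nara (k+2) < nara (k+2) + nara k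
    have := nara_pos k
    omega

lemma nara_ge : ∀ k, k + 1 ≤ nara k
  | 0 => by decide
  | 1 => by decide
  | 2 => by decide
  | (k+3) => by
    have := nara_ge (k+2)
    have := nara_pos k
    show k + 3 + 1 ≤ nara (k+2) + nara k
    omega

lemma nuPow_prefix : ∀ k, nuPow k <+: nuPow (k+1) := by
  intro k
  match k with
  | 0 => decide
  | 1 => decide
  | (k+2) => rw [nuPow_add3]; exact List.prefix_append _ _

lemma nuPow_prefix_le {k l : ℕ} (h : k ≤ l) : nuPow k <+: nuPow l := by
  induction l with
  | zero => simp [Nat.le_zero.mp h]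
  | succ l ih =>
    rcases Nat.lt_or_ge k (l+1) with h' | h'
    · exact (ih (Nat.lt_succ_iff.mp h')).trans (nuPow_prefix l)
    · have : k = l + 1 := le_antisymm h h'
      simp [this]

lemma getD_prefix {l₁ l₂ : List (Fin 3)} (h : l₁ <+: l₂) {j : ℕ} (hj : j < l₁.length) :
    l₂.getD j 0 = l₁.getD j 0 := by
  obtain ⟨t, rfl⟩ := h
  exact List.getD_append _ _ _ _ hj

lemma nword_eq_getD {k j : ℕ} (hj : j < nara k) : nword j = (nuPow k).getD j 0 := by
  have hjk : j < (nuPow k).length := by rwa [length_nuPow]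
  have hj2 : j < (nuPow (j+2)).length := by
    rw [length_nuPow]
    have := nara_ge (j+2)
    omega
  rcases Nat.le_total k (j+2) with h | h
  · rw [nword, getD_prefix (nuPow_prefix_le h) hjk]
  · rw [nword, getD_prefix (nuPow_prefix_le h) hj2]

lemma nword_shift {t i : ℕ} (hi : i < nara t) :
    nword (nara (t+2) + i) = nword i := by
  have h1 : nara (t+2) + i < nara (t+3) := by
    have : nara (t+3) = nara (t+2) + nara t := rfl
    omega
  rw [nword_eq_getD h1, nword_eq_getD hi, nuPow_add3,
    List.getD_append_right _ _ _ _ (by rw [length_nuPow]; omega)]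
  congr 1
  rw [length_nuPow]
  omega

lemma sum_lt (t : ℕ) : ∀ F : Finset ℕ,
    (∀ a ∈ F, ∀ b ∈ F, a < b → a + 3 ≤ b) → (∀ f ∈ F, f < t) →
    (∑ f ∈ F, nara f) < nara t := by
  induction t using Nat.strong_induction_on with
  | _ t ih =>
    intro F hgap hlt
    rcases F.eq_empty_or_nonempty with rfl | hne
    · simpa using nara_pos t
    · set m := F.max' hne with hm
      have hmF : m ∈ F := F.max'_mem hne
      have hsum : nara m + (∑ f ∈ F.erase m, nara f) = ∑ f ∈ F, nara f :=
        Finset.add_sum_erase _ _ hmF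
      have hmt : m < t := hlt m hmF
      have herase : ∀ a ∈ F.erase m, a + 3 ≤ m := by
        intro a ha
        have haF := Finset.mem_of_mem_erase ha
        have hne' := Finset.ne_of_mem_erase ha
        exact hgap a haF m hmF (lt_of_le_of_ne (F.le_max' a haF) hne')
      match m, hmt, hsum, herase, hmF with
      | 0, hmt, hsum, herase, hmF =>
        have : F.erase 0 = ∅ := by
          rw [Finset.eq_empty_iff_forall_notMem]
          intro a ha; have := herase a ha; omega
        rw [← hsum, this]
        simpa using nara_strictMono hmt
      | 1, hmt, hsum, herase, hmF =>
        have : F.erase 1 = ∅ := by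
          rw [Finset.eq_empty_iff_forall_notMem]
          intro a ha; have := herase a ha; omega
        rw [← hsum, this]
        simpa using nara_strictMono hmt
      | (s+2), hmt, hsum, herase, hmF =>
        have hrec : (∑ f ∈ F.erase (s+2), nara f) < nara s := by
          apply ih s (by omega)
          · intro a ha b hb hab
            exact hgap a (Finset.mem_of_mem_erase ha) b (Finset.mem_of_mem_erase hb) hab
          · intro f hf; have := herase f hf; omega
        have h1 : nara (s+2) + nara s = nara (s+3) := rfl
        have h2 : nara (s+3) ≤ nara t := nara_strictMono.le_iff_le.mpr (by omega)
        omega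

theorem nword_from_rep (i : ℕ) (F : Finset ℕ) (hF : NaraRep F i) :
    nword i = if 0 ∈ F then 1 else if 1 ∈ F then 2 else 0 := by
  induction i using Nat.strong_induction_on generalizing F with
  | _ i ih =>
    obtain ⟨hsum, hgap⟩ := hF
    rcases F.eq_empty_or_nonempty with rfl | hne
    · simp at hsum
      subst hsum
      decide
    · set m := F.max' hne with hm
      have hmF : m ∈ F := F.max'_mem hne
      have hadd : nara m + (∑ f ∈ F.erase m, nara f) = i := by
        rw [Finset.add_sum_erase _ _ hmF, hsum]
      have herase : ∀ a ∈ F.erase m, a + 3 ≤ m := by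
        intro a ha
        have haF := Finset.mem_of_mem_erase ha
        have hne' := Finset.ne_of_mem_erase ha
        exact hgap a haF m hmF (lt_of_le_of_ne (F.le_max' a haF) hne')
      match m, hadd, herase, hmF with
      | 0, hadd, herase, hmF =>
        have hE : F.erase 0 = ∅ := by
          rw [Finset.eq_empty_iff_forall_notMem]
          intro a ha; have := herase a ha; omega
        rw [hE] at hadd
        simp only [Finset.sum_empty] at hadd
        have : i = 1 := by rw [← hadd]; rfl
        subst this
        have h0 : (0 : ℕ) ∈ F := hmF
        rw [if_pos h0]
        decide
      | 1, hadd, herase, hmF =>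
        have hE : F.erase 1 = ∅ := by
          rw [Finset.eq_empty_iff_forall_notMem]
          intro a ha; have := herase a ha; omega
        rw [hE] at hadd
        simp only [Finset.sum_empty] at hadd
        have : i = 2 := by rw [← hadd]; rfl
        subst this
        have h0 : (0 : ℕ) ∉ F := by
          intro h0
          have := hgap 0 h0 1 hmF (by omega)
          omega
        rw [if_neg h0, if_pos hmF]
        decide
      | (s+2), hadd, herase, hmF =>
        set i' := ∑ f ∈ F.erase (s+2), nara f with hi'
        have hlt : i' < nara s := by
          apply sum_lt
          · intro a ha b hb hab
            exact hgap a (Finset.mem_of_mem_erase ha) b (Finset.mem_of_mem_erase hb) hab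
          · intro f hf; have := herase f hf; omega
        have hi : i = nara (s+2) + i' := hadd.symm
        have hii' : i' < i := by
          have := nara_pos (s+2); omega
        have hrep' : NaraRep (F.erase (s+2)) i' := by
          refine ⟨rfl, ?_⟩
          intro a ha b hb hab
          exact hgap a (Finset.mem_of_mem_erase ha) b (Finset.mem_of_mem_erase hb) hab
        have := ih i' hii' (F.erase (s+2)) hrep'
        rw [hi, nword_shift hlt, this]
        have e0 : 0 ∈ F.erase (s+2) ↔ 0 ∈ F := by
          simp [Finset.mem_erase]
        have e1 : 1 ∈ F.erase (s+2) ↔ 1 ∈ F := by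
          simp [Finset.mem_erase]
        simp only [e0, e1]
end

section
/- For all i ≥ 1, −1.264 < a(i) − α·i < 0.584 and −2.249 < b(i) − α³·i < 0.559, where α is the real root of X³ = X² + 1 (the Kimberling–Moses conjecture). -/
@[simp] lemma nara_v0 : nara 0 = 1 := rfl
@[simp] lemma nara_v1 : nara 1 = 2 := rfl
@[simp] lemma nara_v2 : nara 2 = 3 := rfl
@[simp] lemma nara_v3 : nara 3 = 4 := rfl
@[simp] lemma nara_v4 : nara 4 = 6 := rfl
@[simp] lemma nara_v5 : nara 5 = 9 := rfl
@[simp] lemma nara_v6 : nara 6 = 13 := rfl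
@[simp] lemma nara_v7 : nara 7 = 19 := rfl
@[simp] lemma nara_v8 : nara 8 = 28 := rfl
@[simp] lemma nara_v9 : nara 9 = 41 := rfl
@[simp] lemma nara_v10 : nara 10 = 60 := rfl
@[simp] lemma nara_v11 : nara 11 = 88 := rfl
@[simp] lemma nara_v12 : nara 12 = 129 := rfl
@[simp] lemma nara_v13 : nara 13 = 189 := rfl
@[simp] lemma nara_v14 : nara 14 = 277 := rfl
@[simp] lemma nara_v15 : nara 15 = 406 := rfl
@[simp] lemma nara_v16 : nara 16 = 595 := rfl
@[simp] lemma nara_v17 : nara 17 = 872 := rfl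
@[simp] lemma nara_v18 : nara 18 = 1278 := rfl
@[simp] lemma nara_v19 : nara 19 = 1873 := rfl
@[simp] lemma nara_v20 : nara 20 = 2745 := rfl
@[simp] lemma nara_v21 : nara 21 = 4023 := rfl
@[simp] lemma nara_v22 : nara 22 = 5896 := rfl
@[simp] lemma nara_v23 : nara 23 = 8641 := rfl
@[simp] lemma nara_v24 : nara 24 = 12664 := rfl
@[simp] lemma nara_v25 : nara 25 = 18560 := rfl
@[simp] lemma nara_v26 : nara 26 = 27201 := rfl
@[simp] lemma nara_v27 : nara 27 = 39865 := rfl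
@[simp] lemma nara_v28 : nara 28 = 58425 := rfl


section gen
variable {α : ℝ} {x : ℕ → ℝ}

lemma hP_gen (hα : α^3 = α^2+1) (hrec : ∀ n, x (n+3) = x (n+2) + x n)
    (hbase : α * x 2 + (α^2 - α) * x 1 + x 0 = 0) :
    ∀ n, α * x (n+2) + (α^2 - α) * x (n+1) + x n = 0 := by
  intro n; induction n with
  | zero => exact hbase
  | succ n ih => linear_combination α * hrec n + α * ih - x (n+1) * hα

lemma W_gen (hα : α^3 = α^2+1) (hrec : ∀ n, x (n+3) = x (n+2) + x n)
    (hbase : α * x 2 + (α^2 - α) * x 1 + x 0 = 0) :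
    ∀ n, α^n * (α * x (n+1)^2 + (α^2-α) * x n * x (n+1) + x n ^2)
      = α * x 1^2 + (α^2-α) * x 0 * x 1 + x 0^2 := by
  intro n; induction n with
  | zero => ring
  | succ n ih =>
    have h := hP_gen hα hrec hbase n
    have hstep : α * (α * x (n+2)^2 + (α^2-α) * x (n+1) * x (n+2) + x (n+1)^2)
        = α * x (n+1)^2 + (α^2-α) * x n * x (n+1) + x n^2 := by
      linear_combination (α * x (n+2) - x n) * h
    calc α^(n+1) * (α * x (n+2)^2 + (α^2-α) * x (n+1) * x (n+2) + x (n+1)^2)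
        = α^n * (α * (α * x (n+2)^2 + (α^2-α) * x (n+1) * x (n+2) + x (n+1)^2)) := by ring
      _ = α^n * (α * x (n+1)^2 + (α^2-α) * x n * x (n+1) + x n^2) := by rw [hstep]
      _ = _ := ih

lemma sq_decay (hα : α^3 = α^2+1) (hrec : ∀ n, x (n+3) = x (n+2) + x n)
    (hbase : α * x 2 + (α^2 - α) * x 1 + x 0 = 0)
    (hlo : (1465571231/1000000000 : ℝ) ≤ α) (hhi : α ≤ (1465571232/1000000000 : ℝ))
    (B : ℝ) (hW0 : α * x 1^2 + (α^2-α) * x 0 * x 1 + x 0^2 ≤ (5594/10000) * α * B) :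
    ∀ n, x n ^ 2 ≤ B * (6824/10000 : ℝ)^n := by
  intro n
  have hαpos : (0:ℝ) < α := by linarith
  have hq : (α^2-α)^2 = α - 1 := by linear_combination (α-1)*hα
  have hsq2 : α^2 ≤ 2147900/1000000 := by nlinarith
  have hcoef : (0:ℝ) ≤ 3*α + 1 - 4*(5594/10000)*α^2 := by nlinarith
  have hpoint : (5594/10000) * α * x n^2
      ≤ α * x (n+1)^2 + (α^2-α) * x n * x (n+1) + x n^2 := by
    nlinarith [sq_nonneg (2*α*x (n+1) + (α^2-α) * x n),
      mul_nonneg hcoef (sq_nonneg (x n)), hq, hαpos]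
  have hW := W_gen hα hrec hbase n
  have hαn : (0:ℝ) < α^n := pow_pos hαpos n
  have h1 : (5594/10000) * α * (x n^2 * α^n) ≤ (5594/10000) * α * B := by
    have h2 := mul_le_mul_of_nonneg_left hpoint (le_of_lt hαn)
    calc (5594/10000) * α * (x n^2 * α^n)
        = α^n * ((5594/10000) * α * x n^2) := by ring
      _ ≤ α^n * (α * x (n+1)^2 + (α^2-α) * x n * x (n+1) + x n^2) := h2
      _ ≤ (5594/10000) * α * B := by rw [hW]; exact hW0
  have h3 : x n^2 * α^n ≤ B :=
    le_of_mul_le_mul_left h1 (by positivity)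
  have h5 : (1:ℝ) ≤ (6824/10000)*α := by linarith
  have h4 : (1:ℝ) ≤ ((6824/10000)*α)^n := one_le_pow₀ h5
  calc x n^2 = x n^2 * 1 := by ring
    _ ≤ x n^2 * ((6824/10000)*α)^n := by
        exact mul_le_mul_of_nonneg_left h4 (sq_nonneg _)
    _ = (x n^2 * α^n) * (6824/10000)^n := by rw [mul_pow]; ring
    _ ≤ B * (6824/10000)^n := by
        exact mul_le_mul_of_nonneg_right h3 (by positivity)

lemma abs_decay (hα : α^3 = α^2+1) (hrec : ∀ n, x (n+3) = x (n+2) + x n)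
    (hbase : α * x 2 + (α^2 - α) * x 1 + x 0 = 0)
    (hlo : (1465571231/1000000000 : ℝ) ≤ α) (hhi : α ≤ (1465571232/1000000000 : ℝ))
    (B c : ℝ) (hW0 : α * x 1^2 + (α^2-α) * x 0 * x 1 + x 0^2 ≤ (5594/10000) * α * B)
    (hc : 0 ≤ c) (hc2 : B ≤ c^2) :
    ∀ n, x n ≤ c * (8261/10000 : ℝ)^n ∧ -(c * (8261/10000 : ℝ)^n) ≤ x n := by
  intro n
  have hsq := sq_decay hα hrec hbase hlo hhi B hW0 n
  have h68 : (6824/10000 : ℝ)^n ≤ ((8261/10000 : ℝ)^n)^2 := by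
    rw [← pow_mul, mul_comm n 2, pow_mul]
    exact pow_le_pow_left₀ (by norm_num) (by norm_num) n
  have hfin : x n ^2 ≤ (c * (8261/10000 : ℝ)^n)^2 := by
    have hB : (0:ℝ) ≤ B := le_trans (sq_nonneg (x 0)) (by
      have h0 := sq_decay hα hrec hbase hlo hhi B hW0 0
      simpa using h0)
    calc x n^2 ≤ B * (6824/10000)^n := hsq
      _ ≤ c^2 * ((8261/10000:ℝ)^n)^2 := by
          exact mul_le_mul hc2 h68 (by positivity) (sq_nonneg c)
      _ = (c * (8261/10000:ℝ)^n)^2 := by ring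
  have hcq : (0:ℝ) ≤ c * (8261/10000:ℝ)^n := by positivity
  exact ⟨by nlinarith [hfin, hcq], by nlinarith [hfin, hcq]⟩

end gen

lemma sum_le_T (x T : ℕ → ℝ) (hkey : ∀ m, x m + T (m+3) ≤ T m)
    (hmono : ∀ m, T (m+1) ≤ T m) (hpos : ∀ m, 0 ≤ T m) :
    ∀ F : Finset ℕ, (∀ a ∈ F, ∀ b ∈ F, a < b → a + 3 ≤ b) →
      ∀ K, (∀ f ∈ F, K ≤ f) → ∑ f ∈ F, x f ≤ T K := by
  have hanti : Antitone T := antitone_nat_of_succ_le hmono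
  intro F
  induction F using Finset.strongInduction with
  | _ F ih =>
    intro hgap K hK
    rcases F.eq_empty_or_nonempty with rfl | hne
    · simpa using hpos K
    · have hm : F.min' hne ∈ F := F.min'_mem hne
      set m := F.min' hne with hmdef
      have herase : F.erase m ⊂ F := Finset.erase_ssubset hm
      have hge : ∀ f ∈ F.erase m, m + 3 ≤ f := by
        intro f hf
        have hfF := Finset.mem_of_mem_erase hf
        have hne' := Finset.ne_of_mem_erase hf
        exact hgap m hm f hfF (lt_of_le_of_ne (F.min'_le f hfF) (Ne.symm hne'))
      have hsum : ∑ f ∈ F.erase m, x f ≤ T (m+3) :=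
        ih _ herase (fun a ha b hb hab =>
          hgap a (Finset.mem_of_mem_erase ha) b (Finset.mem_of_mem_erase hb) hab) (m+3) hge
      have hsplit : x m + ∑ f ∈ F.erase m, x f = ∑ f ∈ F, x f := Finset.add_sum_erase F x hm
      have hTK : T m ≤ T K := hanti (hK m hm)
      linarith [hkey m]

noncomputable def TU : ℕ → ℝ
  | 0 => 520331/500000
  | 1 => 575091/1000000
  | 2 => 506233/1000000
  | 3 => 506233/1000000
  | 4 => 506233/1000000
  | 5 => 14983/50000
  | 6 => 14983/50000
  | 7 => 14983/50000
  | 8 => 145513/1000000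
  | 9 => 145513/1000000
  | 10 => 145513/1000000
  | 11 => 54759/500000
  | 12 => 39893/500000
  | 13 => 39893/500000
  | 14 => 39893/500000
  | 15 => 5377/125000
  | 16 => 5377/125000
  | 17 => 5377/125000
  | 18 => 21129/1000000
  | 19 => 21129/1000000
  | 20 => 21129/1000000
  | 21 => 2637/125000
  | 22 => 7079/500000
  | 23 => 7079/500000
  | 24 => 7079/500000
  | (K+25) => (143/100 : ℝ) * (8261/10000 : ℝ)^(K+25)

lemma TU_0 : TU 0 = 520331/500000 := rfl
lemma TU_1 : TU 1 = 575091/1000000 := rfl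
lemma TU_2 : TU 2 = 506233/1000000 := rfl
lemma TU_3 : TU 3 = 506233/1000000 := rfl
lemma TU_4 : TU 4 = 506233/1000000 := rfl
lemma TU_5 : TU 5 = 14983/50000 := rfl
lemma TU_6 : TU 6 = 14983/50000 := rfl
lemma TU_7 : TU 7 = 14983/50000 := rfl
lemma TU_8 : TU 8 = 145513/1000000 := rfl
lemma TU_9 : TU 9 = 145513/1000000 := rfl
lemma TU_10 : TU 10 = 145513/1000000 := rfl
lemma TU_11 : TU 11 = 54759/500000 := rfl
lemma TU_12 : TU 12 = 39893/500000 := rfl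
lemma TU_13 : TU 13 = 39893/500000 := rfl
lemma TU_14 : TU 14 = 39893/500000 := rfl
lemma TU_15 : TU 15 = 5377/125000 := rfl
lemma TU_16 : TU 16 = 5377/125000 := rfl
lemma TU_17 : TU 17 = 5377/125000 := rfl
lemma TU_18 : TU 18 = 21129/1000000 := rfl
lemma TU_19 : TU 19 = 21129/1000000 := rfl
lemma TU_20 : TU 20 = 21129/1000000 := rfl
lemma TU_21 : TU 21 = 2637/125000 := rfl
lemma TU_22 : TU 22 = 7079/500000 := rfl
lemma TU_23 : TU 23 = 7079/500000 := rfl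
lemma TU_24 : TU 24 = 7079/500000 := rfl
lemma TU_tail (K : ℕ) : TU (K+25) = (143/100 : ℝ) * (8261/10000 : ℝ)^(K+25) := rfl

noncomputable def TL : ℕ → ℝ
  | 0 => 197711/250000
  | 1 => 197711/250000
  | 2 => 197711/250000
  | 3 => 39413/100000
  | 4 => 39413/100000
  | 5 => 39413/100000
  | 6 => 51283/200000
  | 7 => 50997/250000
  | 8 => 50997/250000
  | 9 => 50997/250000
  | 10 => 115567/1000000
  | 11 => 115567/1000000
  | 12 => 115567/1000000
  | 13 => 28439/500000
  | 14 => 28439/500000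
  | 15 => 28439/500000
  | 16 => 49841/1000000
  | 17 => 34957/1000000
  | 18 => 34957/1000000
  | 19 => 34957/1000000
  | 20 => 20039/1000000
  | 21 => 20039/1000000
  | 22 => 20039/1000000
  | 23 => 2411/200000
  | 24 => 2411/200000
  | (K+25) => (143/100 : ℝ) * (8261/10000 : ℝ)^(K+25)

lemma TL_0 : TL 0 = 197711/250000 := rfl
lemma TL_1 : TL 1 = 197711/250000 := rfl
lemma TL_2 : TL 2 = 197711/250000 := rfl
lemma TL_3 : TL 3 = 39413/100000 := rfl
lemma TL_4 : TL 4 = 39413/100000 := rfl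
lemma TL_5 : TL 5 = 39413/100000 := rfl
lemma TL_6 : TL 6 = 51283/200000 := rfl
lemma TL_7 : TL 7 = 50997/250000 := rfl
lemma TL_8 : TL 8 = 50997/250000 := rfl
lemma TL_9 : TL 9 = 50997/250000 := rfl
lemma TL_10 : TL 10 = 115567/1000000 := rfl
lemma TL_11 : TL 11 = 115567/1000000 := rfl
lemma TL_12 : TL 12 = 115567/1000000 := rfl
lemma TL_13 : TL 13 = 28439/500000 := rfl
lemma TL_14 : TL 14 = 28439/500000 := rfl
lemma TL_15 : TL 15 = 28439/500000 := rfl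
lemma TL_16 : TL 16 = 49841/1000000 := rfl
lemma TL_17 : TL 17 = 34957/1000000 := rfl
lemma TL_18 : TL 18 = 34957/1000000 := rfl
lemma TL_19 : TL 19 = 34957/1000000 := rfl
lemma TL_20 : TL 20 = 20039/1000000 := rfl
lemma TL_21 : TL 21 = 20039/1000000 := rfl
lemma TL_22 : TL 22 = 20039/1000000 := rfl
lemma TL_23 : TL 23 = 2411/200000 := rfl
lemma TL_24 : TL 24 = 2411/200000 := rfl
lemma TL_tail (K : ℕ) : TL (K+25) = (143/100 : ℝ) * (8261/10000 : ℝ)^(K+25) := rfl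

noncomputable def DU : ℕ → ℝ
  | 0 => 338369/200000
  | 1 => 13121/15625
  | 2 => 13121/15625
  | 3 => 13121/15625
  | 4 => 271973/500000
  | 5 => 21567/50000
  | 6 => 21567/50000
  | 7 => 21567/50000
  | 8 => 241421/1000000
  | 9 => 241421/1000000
  | 10 => 241421/1000000
  | 11 => 57681/500000
  | 12 => 57681/500000
  | 13 => 57681/500000
  | 14 => 100247/1000000
  | 15 => 68279/1000000
  | 16 => 68279/1000000
  | 17 => 68279/1000000
  | 18 => 7247/200000
  | 19 => 7247/200000
  | 20 => 7247/200000
  | 21 => 20919/1000000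
  | 22 => 477/25000
  | 23 => 477/25000
  | 24 => 2341/125000
  | (K+25) => (21/10 : ℝ) * (8261/10000 : ℝ)^(K+25)

lemma DU_0 : DU 0 = 338369/200000 := rfl
lemma DU_1 : DU 1 = 13121/15625 := rfl
lemma DU_2 : DU 2 = 13121/15625 := rfl
lemma DU_3 : DU 3 = 13121/15625 := rfl
lemma DU_4 : DU 4 = 271973/500000 := rfl
lemma DU_5 : DU 5 = 21567/50000 := rfl
lemma DU_6 : DU 6 = 21567/50000 := rfl
lemma DU_7 : DU 7 = 21567/50000 := rfl
lemma DU_8 : DU 8 = 241421/1000000 := rfl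
lemma DU_9 : DU 9 = 241421/1000000 := rfl
lemma DU_10 : DU 10 = 241421/1000000 := rfl
lemma DU_11 : DU 11 = 57681/500000 := rfl
lemma DU_12 : DU 12 = 57681/500000 := rfl
lemma DU_13 : DU 13 = 57681/500000 := rfl
lemma DU_14 : DU 14 = 100247/1000000 := rfl
lemma DU_15 : DU 15 = 68279/1000000 := rfl
lemma DU_16 : DU 16 = 68279/1000000 := rfl
lemma DU_17 : DU 17 = 68279/1000000 := rfl
lemma DU_18 : DU 18 = 7247/200000 := rfl
lemma DU_19 : DU 19 = 7247/200000 := rfl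
lemma DU_20 : DU 20 = 7247/200000 := rfl
lemma DU_21 : DU 21 = 20919/1000000 := rfl
lemma DU_22 : DU 22 = 477/25000 := rfl
lemma DU_23 : DU 23 = 477/25000 := rfl
lemma DU_24 : DU 24 = 2341/125000 := rfl
lemma DU_tail (K : ℕ) : DU (K+25) = (21/10 : ℝ) * (8261/10000 : ℝ)^(K+25) := rfl

noncomputable def DL : ℕ → ℝ
  | 0 => 217469/200000
  | 1 => 217469/200000
  | 2 => 217469/200000
  | 3 => 643647/1000000
  | 4 => 643647/1000000
  | 5 => 643647/1000000
  | 6 => 62511/200000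
  | 7 => 62511/200000
  | 8 => 62511/200000
  | 9 => 117621/500000
  | 10 => 171381/1000000
  | 11 => 171381/1000000
  | 12 => 171381/1000000
  | 13 => 18481/200000
  | 14 => 18481/200000
  | 15 => 18481/200000
  | 16 => 9079/200000
  | 17 => 9079/200000
  | 18 => 9079/200000
  | 19 => 22661/500000
  | 20 => 1217/40000
  | 21 => 1217/40000
  | 22 => 1217/40000
  | 23 => 17703/1000000
  | 24 => 17703/1000000
  | (K+25) => (21/10 : ℝ) * (8261/10000 : ℝ)^(K+25)

lemma DL_0 : DL 0 = 217469/200000 := rfl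
lemma DL_1 : DL 1 = 217469/200000 := rfl
lemma DL_2 : DL 2 = 217469/200000 := rfl
lemma DL_3 : DL 3 = 643647/1000000 := rfl
lemma DL_4 : DL 4 = 643647/1000000 := rfl
lemma DL_5 : DL 5 = 643647/1000000 := rfl
lemma DL_6 : DL 6 = 62511/200000 := rfl
lemma DL_7 : DL 7 = 62511/200000 := rfl
lemma DL_8 : DL 8 = 62511/200000 := rfl
lemma DL_9 : DL 9 = 117621/500000 := rfl
lemma DL_10 : DL 10 = 171381/1000000 := rfl
lemma DL_11 : DL 11 = 171381/1000000 := rfl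
lemma DL_12 : DL 12 = 171381/1000000 := rfl
lemma DL_13 : DL 13 = 18481/200000 := rfl
lemma DL_14 : DL 14 = 18481/200000 := rfl
lemma DL_15 : DL 15 = 18481/200000 := rfl
lemma DL_16 : DL 16 = 9079/200000 := rfl
lemma DL_17 : DL 17 = 9079/200000 := rfl
lemma DL_18 : DL 18 = 9079/200000 := rfl
lemma DL_19 : DL 19 = 22661/500000 := rfl
lemma DL_20 : DL 20 = 1217/40000 := rfl
lemma DL_21 : DL 21 = 1217/40000 := rfl
lemma DL_22 : DL 22 = 1217/40000 := rfl
lemma DL_23 : DL 23 = 17703/1000000 := rfl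
lemma DL_24 : DL 24 = 17703/1000000 := rfl
lemma DL_tail (K : ℕ) : DL (K+25) = (21/10 : ℝ) * (8261/10000 : ℝ)^(K+25) := rfl



noncomputable def ee (α : ℝ) : ℕ → ℝ := fun n => (nara (n+1) : ℝ) - α * nara n
noncomputable def dd (α : ℝ) : ℕ → ℝ := fun n => (nara (n+3) : ℝ) - α^3 * nara n

lemma hrec_e (α : ℝ) : ∀ n, ee α (n+3) = ee α (n+2) + ee α n := by
  intro n
  have h1 : nara (n+4) = nara (n+3) + nara (n+1) := rfl
  have h2 : nara (n+3) = nara (n+2) + nara n := rfl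
  simp only [ee, show n+3+1 = n+4 from rfl, show n+2+1 = n+3 from rfl, h1, h2]
  push_cast; ring

lemma hrec_d (α : ℝ) : ∀ n, dd α (n+3) = dd α (n+2) + dd α n := by
  intro n
  have h1 : nara (n+6) = nara (n+5) + nara (n+3) := rfl
  have h2 : nara (n+3) = nara (n+2) + nara n := rfl
  simp only [dd, show n+3+3 = n+6 from rfl, show n+2+3 = n+5 from rfl, h1, h2]
  push_cast; ring

lemma hbase_e {α : ℝ} (hα : α^3 = α^2+1) :
    α * ee α 2 + (α^2 - α) * ee α 1 + ee α 0 = 0 := by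
  norm_num [ee]
  linear_combination (-2 : ℝ) * hα

lemma hbase_d {α : ℝ} (hα : α^3 = α^2+1) :
    α * dd α 2 + (α^2 - α) * dd α 1 + dd α 0 = 0 := by
  norm_num [dd]
  linear_combination (-2*α^2 - 3*α - 4) * hα

lemma hW0_e {α : ℝ} (hα : α^3 = α^2+1)
    (hlo : (1465571231/1000000000 : ℝ) ≤ α) (hhi : α ≤ (1465571232/1000000000 : ℝ)) :
    α * ee α 1^2 + (α^2-α) * ee α 0 * ee α 1 + ee α 0^2
      ≤ (5594/10000) * α * (388/1000) := by
  have hred : α * ee α 1^2 + (α^2-α) * ee α 0 * ee α 1 + ee α 0^2 = 1 + α - α^2 := by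
    norm_num [ee]
    linear_combination (2*α - 3) * hα
  rw [hred]
  nlinarith [sq_nonneg (α - 1465571231/1000000000)]

lemma hW0_d {α : ℝ} (hα : α^3 = α^2+1)
    (hlo : (1465571231/1000000000 : ℝ) ≤ α) (hhi : α ≤ (1465571232/1000000000 : ℝ)) :
    α * dd α 1^2 + (α^2-α) * dd α 0 * dd α 1 + dd α 0^2
      ≤ (5594/10000) * α * (8328/10000) := by
  have hred : α * dd α 1^2 + (α^2-α) * dd α 0 * dd α 1 + dd α 0^2 = α^2 - α := by
    norm_num [dd]
    linear_combination (2*α^5 + 4*α^4 + 5*α^3 - 7*α^2 - 13*α - 16) * hα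
  rw [hred]
  nlinarith [sq_nonneg (α - 1465571231/1000000000)]


lemma TU_pos : ∀ K, 0 ≤ TU K := by
  intro K
  by_cases h : K < 25
  · interval_cases K <;> norm_num [TU_0, TU_1, TU_2, TU_3, TU_4, TU_5, TU_6, TU_7, TU_8, TU_9, TU_10, TU_11, TU_12, TU_13, TU_14, TU_15, TU_16, TU_17, TU_18, TU_19, TU_20, TU_21, TU_22, TU_23, TU_24, show (25:ℕ) = 0 + 25 from rfl, show (26:ℕ) = 1 + 25 from rfl, show (27:ℕ) = 2 + 25 from rfl, TU_tail]
  · obtain ⟨K', rfl⟩ : ∃ K', K = K' + 25 := ⟨K - 25, by omega⟩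
    rw [TU_tail]; positivity

lemma TU_mono : ∀ K, TU (K+1) ≤ TU K := by
  intro K
  by_cases h : K < 25
  · interval_cases K <;> norm_num [TU_0, TU_1, TU_2, TU_3, TU_4, TU_5, TU_6, TU_7, TU_8, TU_9, TU_10, TU_11, TU_12, TU_13, TU_14, TU_15, TU_16, TU_17, TU_18, TU_19, TU_20, TU_21, TU_22, TU_23, TU_24, show (25:ℕ) = 0 + 25 from rfl, show (26:ℕ) = 1 + 25 from rfl, show (27:ℕ) = 2 + 25 from rfl, TU_tail]
  · obtain ⟨K', rfl⟩ : ∃ K', K = K' + 25 := ⟨K - 25, by omega⟩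
    have h1 : K' + 25 + 1 = (K'+1) + 25 := by omega
    rw [h1, TU_tail, TU_tail, pow_succ]
    nlinarith [pow_nonneg (by norm_num : (0:ℝ) ≤ 8261/10000) (K'+25)]

lemma TL_pos : ∀ K, 0 ≤ TL K := by
  intro K
  by_cases h : K < 25
  · interval_cases K <;> norm_num [TL_0, TL_1, TL_2, TL_3, TL_4, TL_5, TL_6, TL_7, TL_8, TL_9, TL_10, TL_11, TL_12, TL_13, TL_14, TL_15, TL_16, TL_17, TL_18, TL_19, TL_20, TL_21, TL_22, TL_23, TL_24, show (25:ℕ) = 0 + 25 from rfl, show (26:ℕ) = 1 + 25 from rfl, show (27:ℕ) = 2 + 25 from rfl, TL_tail]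
  · obtain ⟨K', rfl⟩ : ∃ K', K = K' + 25 := ⟨K - 25, by omega⟩
    rw [TL_tail]; positivity

lemma TL_mono : ∀ K, TL (K+1) ≤ TL K := by
  intro K
  by_cases h : K < 25
  · interval_cases K <;> norm_num [TL_0, TL_1, TL_2, TL_3, TL_4, TL_5, TL_6, TL_7, TL_8, TL_9, TL_10, TL_11, TL_12, TL_13, TL_14, TL_15, TL_16, TL_17, TL_18, TL_19, TL_20, TL_21, TL_22, TL_23, TL_24, show (25:ℕ) = 0 + 25 from rfl, show (26:ℕ) = 1 + 25 from rfl, show (27:ℕ) = 2 + 25 from rfl, TL_tail]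
  · obtain ⟨K', rfl⟩ : ∃ K', K = K' + 25 := ⟨K - 25, by omega⟩
    have h1 : K' + 25 + 1 = (K'+1) + 25 := by omega
    rw [h1, TL_tail, TL_tail, pow_succ]
    nlinarith [pow_nonneg (by norm_num : (0:ℝ) ≤ 8261/10000) (K'+25)]

lemma DU_pos : ∀ K, 0 ≤ DU K := by
  intro K
  by_cases h : K < 25
  · interval_cases K <;> norm_num [DU_0, DU_1, DU_2, DU_3, DU_4, DU_5, DU_6, DU_7, DU_8, DU_9, DU_10, DU_11, DU_12, DU_13, DU_14, DU_15, DU_16, DU_17, DU_18, DU_19, DU_20, DU_21, DU_22, DU_23, DU_24, show (25:ℕ) = 0 + 25 from rfl, show (26:ℕ) = 1 + 25 from rfl, show (27:ℕ) = 2 + 25 from rfl, DU_tail]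
  · obtain ⟨K', rfl⟩ : ∃ K', K = K' + 25 := ⟨K - 25, by omega⟩
    rw [DU_tail]; positivity

lemma DU_mono : ∀ K, DU (K+1) ≤ DU K := by
  intro K
  by_cases h : K < 25
  · interval_cases K <;> norm_num [DU_0, DU_1, DU_2, DU_3, DU_4, DU_5, DU_6, DU_7, DU_8, DU_9, DU_10, DU_11, DU_12, DU_13, DU_14, DU_15, DU_16, DU_17, DU_18, DU_19, DU_20, DU_21, DU_22, DU_23, DU_24, show (25:ℕ) = 0 + 25 from rfl, show (26:ℕ) = 1 + 25 from rfl, show (27:ℕ) = 2 + 25 from rfl, DU_tail]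
  · obtain ⟨K', rfl⟩ : ∃ K', K = K' + 25 := ⟨K - 25, by omega⟩
    have h1 : K' + 25 + 1 = (K'+1) + 25 := by omega
    rw [h1, DU_tail, DU_tail, pow_succ]
    nlinarith [pow_nonneg (by norm_num : (0:ℝ) ≤ 8261/10000) (K'+25)]

lemma DL_pos : ∀ K, 0 ≤ DL K := by
  intro K
  by_cases h : K < 25
  · interval_cases K <;> norm_num [DL_0, DL_1, DL_2, DL_3, DL_4, DL_5, DL_6, DL_7, DL_8, DL_9, DL_10, DL_11, DL_12, DL_13, DL_14, DL_15, DL_16, DL_17, DL_18, DL_19, DL_20, DL_21, DL_22, DL_23, DL_24, show (25:ℕ) = 0 + 25 from rfl, show (26:ℕ) = 1 + 25 from rfl, show (27:ℕ) = 2 + 25 from rfl, DL_tail]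
  · obtain ⟨K', rfl⟩ : ∃ K', K = K' + 25 := ⟨K - 25, by omega⟩
    rw [DL_tail]; positivity

lemma DL_mono : ∀ K, DL (K+1) ≤ DL K := by
  intro K
  by_cases h : K < 25
  · interval_cases K <;> norm_num [DL_0, DL_1, DL_2, DL_3, DL_4, DL_5, DL_6, DL_7, DL_8, DL_9, DL_10, DL_11, DL_12, DL_13, DL_14, DL_15, DL_16, DL_17, DL_18, DL_19, DL_20, DL_21, DL_22, DL_23, DL_24, show (25:ℕ) = 0 + 25 from rfl, show (26:ℕ) = 1 + 25 from rfl, show (27:ℕ) = 2 + 25 from rfl, DL_tail]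
  · obtain ⟨K', rfl⟩ : ∃ K', K = K' + 25 := ⟨K - 25, by omega⟩
    have h1 : K' + 25 + 1 = (K'+1) + 25 := by omega
    rw [h1, DL_tail, DL_tail, pow_succ]
    nlinarith [pow_nonneg (by norm_num : (0:ℝ) ≤ 8261/10000) (K'+25)]

section keys
variable {α : ℝ} (hα : α^3 = α^2+1)
  (hlo : (1465571231/1000000000 : ℝ) ≤ α) (hhi : α ≤ (1465571232/1000000000 : ℝ))
include hα hlo hhi

lemma key_TU : ∀ m, ee α m + TU (m+3) ≤ TU m := by
  intro m
  by_cases h : m < 25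
  · interval_cases m <;> norm_num [ee, TU_0, TU_1, TU_2, TU_3, TU_4, TU_5, TU_6, TU_7, TU_8, TU_9, TU_10, TU_11, TU_12, TU_13, TU_14, TU_15, TU_16, TU_17, TU_18, TU_19, TU_20, TU_21, TU_22, TU_23, TU_24, show (25:ℕ) = 0 + 25 from rfl, show (26:ℕ) = 1 + 25 from rfl, show (27:ℕ) = 2 + 25 from rfl, TU_tail] <;> linarith
  · have hd := (abs_decay hα (hrec_e α) (hbase_e hα) hlo hhi (388/1000) (623/1000)
      (hW0_e hα hlo hhi) (by norm_num) (by norm_num) m).1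
    obtain ⟨K', rfl⟩ : ∃ K', m = K' + 25 := ⟨m - 25, by omega⟩
    have h1 : K' + 25 + 3 = (K'+3) + 25 := by omega
    rw [h1, TU_tail, TU_tail]
    have h2 : (8261/10000:ℝ)^(K'+3+25) = (8261/10000:ℝ)^(K'+25) * (8261/10000:ℝ)^3 := by
      rw [← pow_add]
    rw [h2]
    nlinarith [pow_nonneg (by norm_num : (0:ℝ) ≤ 8261/10000) (K'+25), hd]

lemma key_TL : ∀ m, -(ee α m) + TL (m+3) ≤ TL m := by
  intro m
  by_cases h : m < 25
  · interval_cases m <;> norm_num [ee, TL_0, TL_1, TL_2, TL_3, TL_4, TL_5, TL_6, TL_7, TL_8, TL_9, TL_10, TL_11, TL_12, TL_13, TL_14, TL_15, TL_16, TL_17, TL_18, TL_19, TL_20, TL_21, TL_22, TL_23, TL_24, show (25:ℕ) = 0 + 25 from rfl, show (26:ℕ) = 1 + 25 from rfl, show (27:ℕ) = 2 + 25 from rfl, TL_tail] <;> linarith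
  · have hd := (abs_decay hα (hrec_e α) (hbase_e hα) hlo hhi (388/1000) (623/1000)
      (hW0_e hα hlo hhi) (by norm_num) (by norm_num) m).2
    obtain ⟨K', rfl⟩ : ∃ K', m = K' + 25 := ⟨m - 25, by omega⟩
    have h1 : K' + 25 + 3 = (K'+3) + 25 := by omega
    rw [h1, TL_tail, TL_tail]
    have h2 : (8261/10000:ℝ)^(K'+3+25) = (8261/10000:ℝ)^(K'+25) * (8261/10000:ℝ)^3 := by
      rw [← pow_add]
    rw [h2]
    nlinarith [pow_nonneg (by norm_num : (0:ℝ) ≤ 8261/10000) (K'+25), hd]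

lemma key_DU : ∀ m, dd α m + DU (m+3) ≤ DU m := by
  intro m
  have h2lo : (2147899033/1000000000 : ℝ) ≤ α^2 := by nlinarith
  have h2hi : α^2 ≤ (2147899037/1000000000 : ℝ) := by nlinarith
  have h3lo : (3147899033/1000000000 : ℝ) ≤ α^3 := by rw [hα]; linarith
  have h3hi : α^3 ≤ (3147899037/1000000000 : ℝ) := by rw [hα]; linarith
  by_cases h : m < 25
  · interval_cases m <;> norm_num [dd, DU_0, DU_1, DU_2, DU_3, DU_4, DU_5, DU_6, DU_7, DU_8, DU_9, DU_10, DU_11, DU_12, DU_13, DU_14, DU_15, DU_16, DU_17, DU_18, DU_19, DU_20, DU_21, DU_22, DU_23, DU_24, show (25:ℕ) = 0 + 25 from rfl, show (26:ℕ) = 1 + 25 from rfl, show (27:ℕ) = 2 + 25 from rfl, DU_tail] <;> linarith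
  · have hd := (abs_decay hα (hrec_d α) (hbase_d hα) hlo hhi (8328/10000) (913/1000)
      (hW0_d hα hlo hhi) (by norm_num) (by norm_num) m).1
    obtain ⟨K', rfl⟩ : ∃ K', m = K' + 25 := ⟨m - 25, by omega⟩
    have h1 : K' + 25 + 3 = (K'+3) + 25 := by omega
    rw [h1, DU_tail, DU_tail]
    have h2 : (8261/10000:ℝ)^(K'+3+25) = (8261/10000:ℝ)^(K'+25) * (8261/10000:ℝ)^3 := by
      rw [← pow_add]
    rw [h2]
    nlinarith [pow_nonneg (by norm_num : (0:ℝ) ≤ 8261/10000) (K'+25), hd]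

lemma key_DL : ∀ m, -(dd α m) + DL (m+3) ≤ DL m := by
  intro m
  have h2lo : (2147899033/1000000000 : ℝ) ≤ α^2 := by nlinarith
  have h2hi : α^2 ≤ (2147899037/1000000000 : ℝ) := by nlinarith
  have h3lo : (3147899033/1000000000 : ℝ) ≤ α^3 := by rw [hα]; linarith
  have h3hi : α^3 ≤ (3147899037/1000000000 : ℝ) := by rw [hα]; linarith
  by_cases h : m < 25
  · interval_cases m <;> norm_num [dd, DL_0, DL_1, DL_2, DL_3, DL_4, DL_5, DL_6, DL_7, DL_8, DL_9, DL_10, DL_11, DL_12, DL_13, DL_14, DL_15, DL_16, DL_17, DL_18, DL_19, DL_20, DL_21, DL_22, DL_23, DL_24, show (25:ℕ) = 0 + 25 from rfl, show (26:ℕ) = 1 + 25 from rfl, show (27:ℕ) = 2 + 25 from rfl, DL_tail] <;> linarith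
  · have hd := (abs_decay hα (hrec_d α) (hbase_d hα) hlo hhi (8328/10000) (913/1000)
      (hW0_d hα hlo hhi) (by norm_num) (by norm_num) m).2
    obtain ⟨K', rfl⟩ : ∃ K', m = K' + 25 := ⟨m - 25, by omega⟩
    have h1 : K' + 25 + 3 = (K'+3) + 25 := by omega
    rw [h1, DL_tail, DL_tail]
    have h2 : (8261/10000:ℝ)^(K'+3+25) = (8261/10000:ℝ)^(K'+25) * (8261/10000:ℝ)^3 := by
      rw [← pow_add]
    rw [h2]
    nlinarith [pow_nonneg (by norm_num : (0:ℝ) ≤ 8261/10000) (K'+25), hd]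

end keys

lemma nara_pos_s16 (n : ℕ) : 0 < nara n := by
  induction n using Nat.strong_induction_on with
  | _ n ih =>
    match n with
    | 0 | 1 | 2 => decide
    | (m+3) =>
      have h1 := ih m (by omega)
      have h2 := ih (m+2) (by omega)
      have e1 : nara (m+3) = nara (m+2) + nara m := rfl
      omega

lemma nara_lt_succ (n : ℕ) : nara n < nara (n+1) := by
  induction n using Nat.strong_induction_on with
  | _ n ih =>
    match n with
    | 0 | 1 | 2 => decide
    | (m+3) =>
      show nara (m+3) < nara (m+4)
      have h1 := ih m (by omega)
      have h2 := ih (m+2) (by omega)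
      have e1 : nara (m+3) = nara (m+2) + nara m := rfl
      have e2 : nara (m+4) = nara (m+3) + nara (m+1) := rfl
      have e3 : nara (m+3) = nara (m+2) + nara m := rfl
      omega

lemma nara_mono : Monotone nara := monotone_nat_of_le_succ (fun n => (nara_lt_succ n).le)

lemma lt_nara_self (n : ℕ) : n < nara n := by
  induction n using Nat.strong_induction_on with
  | _ n ih =>
    match n with
    | 0 | 1 | 2 => decide
    | (m+3) =>
      have h1 := ih (m+2) (by omega)
      have hp := nara_pos_s16 m
      have e1 : nara (m+3) = nara (m+2) + nara m := rfl
      omega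

lemma exists_rep : ∀ n : ℕ, ∀ k : ℕ, n < nara k →
    ∃ F : Finset ℕ, (∑ f ∈ F, nara f) = n ∧
      (∀ a ∈ F, ∀ b ∈ F, a < b → a + 3 ≤ b) ∧ ∀ f ∈ F, f < k := by
  intro n
  induction n using Nat.strong_induction_on with
  | _ n ih =>
    intro k hk
    rcases Nat.eq_zero_or_pos n with rfl | hpos
    · exact ⟨∅, by simp, by simp, by simp⟩
    · obtain ⟨j, hjk, hjle, hnext⟩ : ∃ j, j < k ∧ nara j ≤ n ∧ n < nara (j+1) := by
        have hP0 : nara 0 ≤ n := by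
          have : nara 0 = 1 := rfl
          omega
        have hjle : nara (Nat.findGreatest (fun t => nara t ≤ n) k) ≤ n :=
          Nat.findGreatest_spec (P := fun t => nara t ≤ n) (Nat.zero_le k) hP0
        have hle : Nat.findGreatest (fun t => nara t ≤ n) k ≤ k :=
          Nat.findGreatest_le k
        have hjk : Nat.findGreatest (fun t => nara t ≤ n) k < k := by
          rcases lt_or_eq_of_le hle with h | h
          · exact h
          · exfalso
            rw [h] at hjle
            omega
        refine ⟨Nat.findGreatest (fun t => nara t ≤ n) k, hjk, hjle, ?_⟩
        by_contra hcon
        push_neg at hcon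
        exact Nat.findGreatest_is_greatest (P := fun t => nara t ≤ n)
          (Nat.lt_succ_self _) (by omega) hcon
      rcases Nat.lt_or_ge j 2 with hj2 | hj2
      · interval_cases j
        · have hn1 : nara (0+1) = 2 := rfl
          have hn0 : nara 0 = 1 := rfl
          have : n = 1 := by omega
          subst this
          exact ⟨{0}, by simp [nara], by simp, by simp; omega⟩
        · have hn2 : nara (1+1) = 3 := rfl
          have hn1 : nara 1 = 2 := rfl
          have : n = 2 := by omega
          subst this
          exact ⟨{1}, by simp [nara], by simp, by simp; omega⟩
      · obtain ⟨j', rfl⟩ : ∃ j', j = j' + 2 := ⟨j - 2, by omega⟩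
        have hrec : nara (j'+2+1) = nara (j'+2) + nara j' := rfl
        have hrest : n - nara (j'+2) < nara j' := by omega
        have hrlt : n - nara (j'+2) < n := by
          have := nara_pos_s16 (j'+2); omega
        obtain ⟨F', hs, hg, hb⟩ := ih _ hrlt j' hrest
        have hnotin : j'+2 ∉ F' := fun hmem => by have := hb _ hmem; omega
        refine ⟨insert (j'+2) F', ?_, ?_, ?_⟩
        · rw [Finset.sum_insert hnotin, hs]; omega
        · intro x hx y hy hxy
          rcases Finset.mem_insert.1 hx with rfl | hx' <;>
            rcases Finset.mem_insert.1 hy with rfl | hy'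
          · omega
          · have := hb _ hy'; omega
          · have := hb _ hx'; omega
          · exact hg x hx' y hy' hxy
        · intro f hf
          rcases Finset.mem_insert.1 hf with rfl | hf'
          · omega
          · have := hb _ hf'; omega

lemma exists_naraRep (n : ℕ) : ∃ F : Finset ℕ, NaraRep F n := by
  obtain ⟨F, hs, hg, _⟩ := exists_rep n n (lt_nara_self n)
  exact ⟨F, hs, hg⟩

theorem kimberling_moses_conjecture (a b : ℕ → ℕ)
    (ha : ∀ j : ℕ, 1 ≤ j → ∀ F : Finset ℕ, NaraRep F (j - 1) →
      a j = (∑ f ∈ F, nara (f + 1)) + 1)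
    (hb : ∀ j : ℕ, 1 ≤ j → ∀ F : Finset ℕ, NaraRep F (j - 1) →
      b j = (∑ f ∈ F, nara (f + 3)) + 2)
    (α : ℝ) (hα : α ^ 3 = α ^ 2 + 1) :
    ∀ i : ℕ, 1 ≤ i →
      (-1.264 < (a i : ℝ) - α * i ∧ (a i : ℝ) - α * i < 0.584) ∧
      (-2.249 < (b i : ℝ) - α ^ 3 * i ∧ (b i : ℝ) - α ^ 3 * i < 0.559) := by
  have hlo : (1465571231/1000000000 : ℝ) ≤ α := by
    nlinarith [sq_nonneg (α - 1465571231/1000000000), sq_nonneg α, sq_nonneg (α-1), sq_nonneg (α+1)]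
  have hhi : α ≤ (1465571232/1000000000 : ℝ) := by
    nlinarith [sq_nonneg (α - 1465571232/1000000000), sq_nonneg α, sq_nonneg (α-1), sq_nonneg (α+1)]
  have h2lo : (2147899033/1000000000 : ℝ) ≤ α^2 := by nlinarith
  have h2hi : α^2 ≤ (2147899037/1000000000 : ℝ) := by nlinarith
  intro i hi
  obtain ⟨F, hFsum, hFgap⟩ := exists_naraRep (i - 1)
  have haF := ha i hi F ⟨hFsum, hFgap⟩
  have hbF := hb i hi F ⟨hFsum, hFgap⟩
  have hisum : (∑ f ∈ F, (nara f : ℝ)) = (i : ℝ) - 1 := by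
    have h1 : ((∑ f ∈ F, nara f : ℕ) : ℝ) = ((i - 1 : ℕ) : ℝ) := by rw [hFsum]
    push_cast [Nat.cast_sub hi] at h1
    exact h1
  have hSe : ∑ f ∈ F, ee α f = ((a i : ℝ) - 1) - α * ((i:ℝ) - 1) := by
    have h1 : (a i : ℝ) = (∑ f ∈ F, (nara (f+1) : ℝ)) + 1 := by
      rw [haF]; push_cast; ring
    simp only [ee, Finset.sum_sub_distrib, ← Finset.mul_sum, hisum]
    rw [show (∑ f ∈ F, (nara (f+1) : ℝ)) = (a i : ℝ) - 1 by linarith [h1]]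
  have hSd : ∑ f ∈ F, dd α f = ((b i : ℝ) - 2) - α^3 * ((i:ℝ) - 1) := by
    have h1 : (b i : ℝ) = (∑ f ∈ F, (nara (f+3) : ℝ)) + 2 := by
      rw [hbF]; push_cast; ring
    simp only [dd, Finset.sum_sub_distrib, ← Finset.mul_sum, hisum]
    rw [show (∑ f ∈ F, (nara (f+3) : ℝ)) = (b i : ℝ) - 2 by linarith [h1]]
  have hup_e : ∑ f ∈ F, ee α f ≤ TU 0 :=
    sum_le_T (ee α) TU (key_TU hα hlo hhi) TU_mono TU_pos F hFgap 0 (fun f _ => Nat.zero_le f)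
  have hlo_e : -(TL 0) ≤ ∑ f ∈ F, ee α f := by
    have h := sum_le_T (fun n => -(ee α n)) TL (key_TL hα hlo hhi) TL_mono TL_pos F hFgap 0
      (fun f _ => Nat.zero_le f)
    rw [Finset.sum_neg_distrib] at h
    linarith
  have hup_d : ∑ f ∈ F, dd α f ≤ DU 0 :=
    sum_le_T (dd α) DU (key_DU hα hlo hhi) DU_mono DU_pos F hFgap 0 (fun f _ => Nat.zero_le f)
  have hlo_d : -(DL 0) ≤ ∑ f ∈ F, dd α f := by
    have h := sum_le_T (fun n => -(dd α n)) DL (key_DL hα hlo hhi) DL_mono DL_pos F hFgap 0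
      (fun f _ => Nat.zero_le f)
    rw [Finset.sum_neg_distrib] at h
    linarith
  rw [TU_0] at hup_e
  rw [TL_0] at hlo_e
  rw [DU_0] at hup_d
  rw [DL_0] at hlo_d
  norm_num
  refine ⟨⟨?_, ?_⟩, ?_, ?_⟩
  · nlinarith [hSe, hlo_e]
  · nlinarith [hSe, hup_e]
  · nlinarith [hSd, hlo_d]
  · nlinarith [hSd, hup_d]
end
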